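/- arXiv:2002.12410 — 6 statements merged into one kernel-verified Lean document; each statement's English description precedes it below -/
import Mathlib

section
/- If a compression operator C satisfies α‖x‖² ≤ E‖C(x)‖² ≤ β⟨E[C(x)], x⟩ for all x ∈ ℝ^d with α, β > 0, then β² ≥ α. -/
/-!
Test the two bounds at a unit vector `x`. By Cauchy–Schwarz and Jensen,
`E‖C x‖² ≤ β ⟪E[C x], x⟫ ≤ |β| ‖E[C x]‖ ≤ |β| (E‖C x‖²)^{1/2}`, hence `E‖C x‖² ≤ β²`,
while the lower bound gives `α ≤ E‖C x‖²`.
-/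

open MeasureTheory

section

variable {Ω E : Type*} [MeasurableSpace Ω] {μ : Measure Ω} [IsProbabilityMeasure μ]

theorem sq_norm_integral_le_integral_sq_norm [NormedAddCommGroup E] [NormedSpace ℝ E]
    {f : Ω → E} (hf : Integrable (fun ω => ‖f ω‖ ^ 2) μ) :
    ‖∫ ω, f ω ∂μ‖ ^ 2 ≤ ∫ ω, ‖f ω‖ ^ 2 ∂μ := by
  have hmeas : AEStronglyMeasurable (fun ω => ‖f ω‖) μ := by
    simpa only [Real.sqrt_sq (norm_nonneg _)] using hf.aemeasurable.sqrt.aestronglyMeasurable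
  have hmemLp : MemLp (fun ω => ‖f ω‖) 2 μ := (memLp_two_iff_integrable_sq hmeas).2 hf
  have hmean_sq : (∫ ω, ‖f ω‖ ∂μ) ^ 2 ≤ ∫ ω, ‖f ω‖ ^ 2 ∂μ := by
    have := ProbabilityTheory.variance_nonneg (fun ω => ‖f ω‖) μ
    rwa [ProbabilityTheory.variance_eq_sub hmemLp, sub_nonneg] at this
  calc ‖∫ ω, f ω ∂μ‖ ^ 2 ≤ (∫ ω, ‖f ω‖ ∂μ) ^ 2 := by
        gcongr
        exact norm_integral_le_integral_norm f
    _ ≤ ∫ ω, ‖f ω‖ ^ 2 ∂μ := hmean_sq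

theorem integral_sq_norm_le_sq_of_le_inner [NormedAddCommGroup E] [InnerProductSpace ℝ E]
    {f : Ω → E} (hf : Integrable (fun ω => ‖f ω‖ ^ 2) μ) {x : E} (hx : ‖x‖ = 1) {β : ℝ}
    (hle : ∫ ω, ‖f ω‖ ^ 2 ∂μ ≤ β * inner ℝ (∫ ω, f ω ∂μ) x) :
    ∫ ω, ‖f ω‖ ^ 2 ∂μ ≤ β ^ 2 := by
  set I := ∫ ω, ‖f ω‖ ^ 2 ∂μ
  set m := ∫ ω, f ω ∂μ
  have hI : 0 ≤ I := integral_nonneg fun ω => by positivity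
  have hinner : |inner ℝ m x| ≤ ‖m‖ := by simpa [hx] using abs_real_inner_le_norm m x
  have hI_le : I ≤ |β| * ‖m‖ :=
    calc I ≤ β * inner ℝ m x := hle
      _ ≤ |β| * |inner ℝ m x| := by rw [← abs_mul]; exact le_abs_self _
      _ ≤ |β| * ‖m‖ := by gcongr
  have hm : ‖m‖ ^ 2 ≤ I := sq_norm_integral_le_integral_sq_norm hf
  -- `I² ≤ β² ‖m‖² ≤ β² I`
  nlinarith [abs_nonneg β, norm_nonneg m, sq_abs β]

end

theorem stmt0_general {d : ℕ} (hd : 0 < d) {Ω : Type*} [MeasurableSpace Ω]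
    (μ : Measure Ω) [IsProbabilityMeasure μ]
    (C : EuclideanSpace ℝ (Fin d) → Ω → EuclideanSpace ℝ (Fin d))
    (α β : ℝ)
    (hintC2 : ∀ x, Integrable (fun ω => ‖C x ω‖ ^ 2) μ)
    (hB : ∀ x, α * ‖x‖ ^ 2 ≤ ∫ ω, ‖C x ω‖ ^ 2 ∂μ ∧
      ∫ ω, ‖C x ω‖ ^ 2 ∂μ ≤ β * (inner ℝ (∫ ω, C x ω ∂μ) x : ℝ)) :
    β ^ 2 ≥ α := by
  set x : EuclideanSpace ℝ (Fin d) := EuclideanSpace.single ⟨0, hd⟩ 1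
  have hx : ‖x‖ = 1 := by simp [x]
  obtain ⟨hlower, hupper⟩ := hB x
  calc α = α * ‖x‖ ^ 2 := by rw [hx, one_pow, mul_one]
    _ ≤ ∫ ω, ‖C x ω‖ ^ 2 ∂μ := hlower
    _ ≤ β ^ 2 := integral_sq_norm_le_sq_of_le_inner (hintC2 x) hx hupper

/-- If `C` satisfies `α‖x‖² ≤ E‖C(x)‖² ≤ β⟨E[C(x)], x⟩` for all `x ∈ ℝ^d`
with `α, β > 0`, then `β² ≥ α`. -/
theorem stmt0 {d : ℕ} (hd : 0 < d) {Ω : Type*} [MeasurableSpace Ω]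
    (μ : Measure Ω) [IsProbabilityMeasure μ]
    (C : EuclideanSpace ℝ (Fin d) → Ω → EuclideanSpace ℝ (Fin d))
    (α β : ℝ) (hα : 0 < α) (hβ : 0 < β)
    (hintC : ∀ x, Integrable (C x) μ)
    (hintC2 : ∀ x, Integrable (fun ω => ‖C x ω‖ ^ 2) μ)
    (hB : ∀ x, α * ‖x‖ ^ 2 ≤ ∫ ω, ‖C x ω‖ ^ 2 ∂μ ∧
      ∫ ω, ‖C x ω‖ ^ 2 ∂μ ≤ β * (inner ℝ (∫ ω, C x ω ∂μ) x : ℝ)) :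
    β ^ 2 ≥ α :=
  stmt0_general hd μ C α β hintC2 hB
end

section
/- If C ∈ B¹(α,β), then the scaled operator (1/β)C belongs to B³(β²/α), i.e., E‖(1/β)C(x) − x‖² ≤ (1 − α/β²)‖x‖² for all x. -/
/-!
Expanding the square, `E‖C x / β - x‖² = E‖C x‖² / β² - 2 ⟪E[C x], x⟫ / β + ‖x‖²`. The upper
`B¹` bound `E‖C x‖² ≤ β ⟪E[C x], x⟫` lets the cross term absorb twice the first term, leaving
`‖x‖² - E‖C x‖² / β²`, and the lower bound `α ‖x‖² ≤ E‖C x‖²` finishes.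
-/

open MeasureTheory

open scoped RealInnerProductSpace

section

variable {Ω E : Type*} [MeasurableSpace Ω] {μ : Measure Ω} [IsProbabilityMeasure μ]
  [NormedAddCommGroup E] [InnerProductSpace ℝ E] [CompleteSpace E]

theorem integral_norm_sub_sq {X : Ω → E} (hX : Integrable X μ)
    (hX2 : Integrable (fun ω => ‖X ω‖ ^ 2) μ) (x : E) :
    ∫ ω, ‖X ω - x‖ ^ 2 ∂μ = ∫ ω, ‖X ω‖ ^ 2 ∂μ - 2 * ⟪∫ ω, X ω ∂μ, x⟫ + ‖x‖ ^ 2 := by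
  have hinner : Integrable (fun ω => 2 * ⟪X ω, x⟫) μ := (hX.inner_const x).const_mul 2
  simp_rw [norm_sub_sq_real]
  rw [integral_add (f := fun ω => ‖X ω‖ ^ 2 - 2 * ⟪X ω, x⟫) (hX2.sub hinner)
    (integrable_const _), integral_sub hX2 hinner, integral_const_mul]
  simp_rw [real_inner_comm x]
  rw [integral_inner hX x]
  simp

theorem integral_norm_smul_sub_sq {X : Ω → E} (hX : Integrable X μ)
    (hX2 : Integrable (fun ω => ‖X ω‖ ^ 2) μ) (c : ℝ) (x : E) :
    ∫ ω, ‖c • X ω - x‖ ^ 2 ∂μ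
      = c ^ 2 * ∫ ω, ‖X ω‖ ^ 2 ∂μ - 2 * c * ⟪∫ ω, X ω ∂μ, x⟫ + ‖x‖ ^ 2 := by
  have hcX2 : Integrable (fun ω => ‖c • X ω‖ ^ 2) μ := by
    simpa only [norm_smul, mul_pow, Real.norm_eq_abs, sq_abs] using hX2.const_mul (c ^ 2)
  rw [integral_norm_sub_sq (X := fun ω => c • X ω) (hX.smul c) hcX2, integral_smul,
    real_inner_smul_left]
  simp only [norm_smul, mul_pow, Real.norm_eq_abs, sq_abs, integral_const_mul]
  ring

end

theorem stmt2_general {d : ℕ} {Ω : Type*} [MeasurableSpace Ω]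
    (μ : Measure Ω) [IsProbabilityMeasure μ]
    (C : EuclideanSpace ℝ (Fin d) → Ω → EuclideanSpace ℝ (Fin d))
    (α β : ℝ) (hβ : 0 < β)
    (hintC : ∀ x, Integrable (C x) μ)
    (hintC2 : ∀ x, Integrable (fun ω => ‖C x ω‖ ^ 2) μ)
    (hB : ∀ x, α * ‖x‖ ^ 2 ≤ ∫ ω, ‖C x ω‖ ^ 2 ∂μ ∧
      ∫ ω, ‖C x ω‖ ^ 2 ∂μ ≤ β * (inner ℝ (∫ ω, C x ω ∂μ) x : ℝ)) :
    ∀ x, ∫ ω, ‖(1 / β) • C x ω - x‖ ^ 2 ∂μ ≤ (1 - α / β ^ 2) * ‖x‖ ^ 2 := by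
  intro x
  obtain ⟨hlower, hupper⟩ := hB x
  set I := ∫ ω, ‖C x ω‖ ^ 2 ∂μ
  have hcross : I / β ≤ ⟪∫ ω, C x ω ∂μ, x⟫ := (div_le_iff₀' hβ).2 hupper
  rw [integral_norm_smul_sub_sq (hintC x) (hintC2 x)]
  calc (1 / β) ^ 2 * I - 2 * (1 / β) * ⟪∫ ω, C x ω ∂μ, x⟫ + ‖x‖ ^ 2
      ≤ (1 / β) ^ 2 * I - 2 * (1 / β) * (I / β) + ‖x‖ ^ 2 := by gcongr
    _ = ‖x‖ ^ 2 - I / β ^ 2 := by ring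
    _ ≤ ‖x‖ ^ 2 - α * ‖x‖ ^ 2 / β ^ 2 := by gcongr
    _ = (1 - α / β ^ 2) * ‖x‖ ^ 2 := by ring

/-- If `C ∈ B¹(α,β)`, then `(1/β)C ∈ B³(β²/α)`, i.e.
`E‖(1/β)C(x) − x‖² ≤ (1 − α/β²)‖x‖²` for all `x`. -/
theorem stmt2 {d : ℕ} {Ω : Type*} [MeasurableSpace Ω]
    (μ : Measure Ω) [IsProbabilityMeasure μ]
    (C : EuclideanSpace ℝ (Fin d) → Ω → EuclideanSpace ℝ (Fin d))
    (α β : ℝ) (hα : 0 < α) (hβ : 0 < β)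
    (hintC : ∀ x, Integrable (C x) μ)
    (hintC2 : ∀ x, Integrable (fun ω => ‖C x ω‖ ^ 2) μ)
    (hB : ∀ x, α * ‖x‖ ^ 2 ≤ ∫ ω, ‖C x ω‖ ^ 2 ∂μ ∧
      ∫ ω, ‖C x ω‖ ^ 2 ∂μ ≤ β * (inner ℝ (∫ ω, C x ω ∂μ) x : ℝ)) :
    ∀ x, ∫ ω, ‖(1 / β) • C x ω - x‖ ^ 2 ∂μ ≤ (1 - α / β ^ 2) * ‖x‖ ^ 2 :=
  stmt2_general μ C α β hβ hintC hintC2 hB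
end

section
/- If C ∈ B²(γ,β), then C ∈ B¹(γ²,β) and (1/β)C ∈ B³(β/γ), i.e., E‖(1/β)C(x) − x‖² ≤ (1 − γ/β)‖x‖² for all x. -/
/-!
Write `m = E[C(x)]`. Cauchy–Schwarz turns `γ‖x‖² ≤ ⟪m, x⟫` into `γ‖x‖ ≤ ‖m‖`, and Jensen's
inequality for `‖·‖²` gives `‖m‖² ≤ E‖C(x)‖²`. For the contraction, expand
`E‖C(x)/β − x‖² = E‖C(x)‖²/β² − 2⟪m, x⟫/β + ‖x‖²` and bound the first term by `⟪m, x⟫/β`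
and the remaining `−⟪m, x⟫/β` by `−γ‖x‖²/β`.
-/

open MeasureTheory

section

variable {α E : Type*} [MeasurableSpace α] {μ : Measure α} [IsProbabilityMeasure μ]
  [NormedAddCommGroup E]

theorem norm_integral_sq_le_integral_norm_sq [NormedSpace ℝ E] [CompleteSpace E] {f : α → E}
    (hf : Integrable f μ) (hf2 : Integrable (fun a => ‖f a‖ ^ 2) μ) :
    ‖∫ a, f a ∂μ‖ ^ 2 ≤ ∫ a, ‖f a‖ ^ 2 ∂μ :=
  (convexOn_univ_norm.pow (fun _ _ => norm_nonneg _) 2).map_integral_le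
    (continuous_norm.pow 2).continuousOn isClosed_univ (by simp) hf hf2

theorem integral_norm_smul_sub_sq_s4 [InnerProductSpace ℝ E] [CompleteSpace E] {f : α → E}
    (hf : Integrable f μ) (hf2 : Integrable (fun a => ‖f a‖ ^ 2) μ) (c : ℝ) (x : E) :
    ∫ a, ‖c • f a - x‖ ^ 2 ∂μ
      = c ^ 2 * ∫ a, ‖f a‖ ^ 2 ∂μ - 2 * c * inner ℝ (∫ a, f a ∂μ) x + ‖x‖ ^ 2 := by
  have hexpand : ∀ a, ‖c • f a - x‖ ^ 2
      = (c ^ 2 * ‖f a‖ ^ 2 - 2 * c * inner ℝ x (f a)) + ‖x‖ ^ 2 := fun a => by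
    rw [norm_sub_sq_real, norm_smul, real_inner_smul_left, real_inner_comm, mul_pow,
      Real.norm_eq_abs, sq_abs]
    ring
  have hinner : Integrable (fun a => inner ℝ x (f a)) μ := hf.const_inner x
  have hint : Integrable (fun a => c ^ 2 * ‖f a‖ ^ 2 - 2 * c * inner ℝ x (f a)) μ :=
    (hf2.const_mul _).sub (hinner.const_mul _)
  simp_rw [hexpand]
  rw [integral_add hint (integrable_const _),
    integral_sub (hf2.const_mul _) (hinner.const_mul _), integral_const_mul, integral_const_mul,
    integral_inner hf, integral_const, probReal_univ, one_smul, real_inner_comm x]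

end

theorem sq_mul_norm_sq_le_of_mul_norm_sq_le_inner {E : Type*} [NormedAddCommGroup E]
    [InnerProductSpace ℝ E] {γ : ℝ} {v x : E} (hγ : 0 ≤ γ)
    (h : γ * ‖x‖ ^ 2 ≤ inner ℝ v x) : γ ^ 2 * ‖x‖ ^ 2 ≤ ‖v‖ ^ 2 := by
  have hcs : γ * ‖x‖ * ‖x‖ ≤ ‖v‖ * ‖x‖ := by
    nlinarith [real_inner_le_norm v x]
  rcases (norm_nonneg x).eq_or_lt with hx | hx
  · rw [← hx, zero_pow two_ne_zero, mul_zero]; positivity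
  · rw [← mul_pow]
    exact pow_le_pow_left₀ (by positivity) (le_of_mul_le_mul_right hcs hx) 2

/-- If `C ∈ B²(γ,β)`, then `C ∈ B¹(γ²,β)` and `(1/β)C ∈ B³(β/γ)`, i.e.
`E‖(1/β)C(x) − x‖² ≤ (1 − γ/β)‖x‖²` for all `x`. -/
theorem stmt4 {d : ℕ} {Ω : Type*} [MeasurableSpace Ω]
    (μ : Measure Ω) [IsProbabilityMeasure μ]
    (C : EuclideanSpace ℝ (Fin d) → Ω → EuclideanSpace ℝ (Fin d))
    (γ β : ℝ) (hγ : 0 < γ) (hβ : 0 < β)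
    (hintC : ∀ x, Integrable (C x) μ)
    (hintC2 : ∀ x, Integrable (fun ω => ‖C x ω‖ ^ 2) μ)
    (hB : ∀ x, γ * ‖x‖ ^ 2 ≤ (inner ℝ (∫ ω, C x ω ∂μ) x : ℝ) ∧
      ∫ ω, ‖C x ω‖ ^ 2 ∂μ ≤ β * (inner ℝ (∫ ω, C x ω ∂μ) x : ℝ)) :
    (∀ x, γ ^ 2 * ‖x‖ ^ 2 ≤ ∫ ω, ‖C x ω‖ ^ 2 ∂μ ∧
      ∫ ω, ‖C x ω‖ ^ 2 ∂μ ≤ β * (inner ℝ (∫ ω, C x ω ∂μ) x : ℝ)) ∧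
    (∀ x, ∫ ω, ‖(1 / β) • C x ω - x‖ ^ 2 ∂μ ≤ (1 - γ / β) * ‖x‖ ^ 2) := by
  refine ⟨fun x => ⟨?_, (hB x).2⟩, fun x => ?_⟩
  · calc γ ^ 2 * ‖x‖ ^ 2 ≤ ‖∫ ω, C x ω ∂μ‖ ^ 2 :=
          sq_mul_norm_sq_le_of_mul_norm_sq_le_inner hγ.le (hB x).1
      _ ≤ ∫ ω, ‖C x ω‖ ^ 2 ∂μ := norm_integral_sq_le_integral_norm_sq (hintC x) (hintC2 x)
  · obtain ⟨hlower, hupper⟩ := hB x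
    set p := inner ℝ (∫ ω, C x ω ∂μ) x
    rw [integral_norm_smul_sub_sq_s4 (hintC x) (hintC2 x)]
    calc (1 / β) ^ 2 * ∫ ω, ‖C x ω‖ ^ 2 ∂μ - 2 * (1 / β) * p + ‖x‖ ^ 2
        ≤ (1 / β) ^ 2 * (β * p) - 2 * (1 / β) * p + ‖x‖ ^ 2 := by gcongr
      _ = ‖x‖ ^ 2 - p / β := by field_simp; ring
      _ ≤ ‖x‖ ^ 2 - γ * ‖x‖ ^ 2 / β := by gcongr
      _ = (1 - γ / β) * ‖x‖ ^ 2 := by ring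
end

section
/- Let (a_k)_{k∈ℤ} be an increasing positive sequence with inf a_k = 0, sup a_k = ∞. The stochastic rounding C that maps t ∈ [a_k, a_{k+1}] to a_k with probability (a_{k+1}−t)/(a_{k+1}−a_k) and to a_{k+1} otherwise is unbiased and satisfies E[C(t)²] = t² + (t − a_k)(a_{k+1} − t), and sup over t ∈ [a_k, a_{k+1}] of E[C(t)²]/t² equals (1/4)(a_k/a_{k+1} + a_{k+1}/a_k + 2), attained at t = 2a_k a_{k+1}/(a_k + a_{k+1}). -/
/-- Stochastic (unbiased) rounding to an increasing positive grid `(a_k)_{k∈ℤ}`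
with `inf a_k = 0`, `sup a_k = ∞`: for `t ∈ [a_k, a_{k+1}]` the rounding is
unbiased, its second moment is `t² + (t − a_k)(a_{k+1} − t)`, and the relative
second moment `E[C(t)²]/t²` is at most `(1/4)(a_k/a_{k+1} + a_{k+1}/a_k + 2)`,
with equality at `t = 2a_k a_{k+1}/(a_k + a_{k+1})`. -/
theorem stmt12 (a : ℤ → ℝ) (ha : StrictMono a) (hpos : ∀ k, 0 < a k)
    (hinf : ∀ ε > 0, ∃ k, a k < ε) (hsup : ∀ M, ∃ k, M < a k) (k : ℤ) :
    (∀ t ∈ Set.Icc (a k) (a (k + 1)),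
      ((a (k + 1) - t) / (a (k + 1) - a k)) * a k
        + ((t - a k) / (a (k + 1) - a k)) * a (k + 1) = t ∧
      ((a (k + 1) - t) / (a (k + 1) - a k)) * (a k) ^ 2
        + ((t - a k) / (a (k + 1) - a k)) * (a (k + 1)) ^ 2
        = t ^ 2 + (t - a k) * (a (k + 1) - t) ∧
      (t ^ 2 + (t - a k) * (a (k + 1) - t)) / t ^ 2
        ≤ (1 / 4) * (a k / a (k + 1) + a (k + 1) / a k + 2)) ∧
    (2 * a k * a (k + 1) / (a k + a (k + 1)) ∈ Set.Icc (a k) (a (k + 1)) ∧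
      ((2 * a k * a (k + 1) / (a k + a (k + 1))) ^ 2
          + ((2 * a k * a (k + 1) / (a k + a (k + 1))) - a k)
            * (a (k + 1) - (2 * a k * a (k + 1) / (a k + a (k + 1)))))
        / (2 * a k * a (k + 1) / (a k + a (k + 1))) ^ 2
        = (1 / 4) * (a k / a (k + 1) + a (k + 1) / a k + 2)) := by
  set b := a k with hb'
  set c := a (k + 1) with hc'
  have hb : 0 < b := hpos k
  have hc : 0 < c := hpos (k + 1)
  have hbc : b < c := ha (by omega)
  have hcb : (0:ℝ) < c - b := by linarith
  have hsum : (0:ℝ) < b + c := by linarith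
  constructor
  · intro t ht
    obtain ⟨ht1, ht2⟩ := ht
    have htpos : 0 < t := lt_of_lt_of_le hb ht1
    refine ⟨?_, ?_, ?_⟩
    · field_simp
      ring
    · field_simp
      ring
    · have key : (t ^ 2 + (t - b) * (c - t)) * (4 * (b * c))
          ≤ ((b * b + c * c + 2 * (b * c))) * t ^ 2 := by
        nlinarith [sq_nonneg ((b + c) * t - 2 * b * c)]
      rw [div_le_iff₀ (by positivity)]
      have : (1 / 4 : ℝ) * (b / c + c / b + 2)
          = (b * b + c * c + 2 * (b * c)) / (4 * (b * c)) := by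
        field_simp
      rw [this, div_mul_eq_mul_div, le_div_iff₀ (by positivity)]
      nlinarith [key]
  · refine ⟨⟨?_, ?_⟩, ?_⟩
    · rw [le_div_iff₀ hsum]; nlinarith
    · rw [div_le_iff₀ hsum]; nlinarith
    · have ht0 : 2 * b * c / (b + c) ≠ 0 := by positivity
      field_simp
      ring
end

section
/- Let f : ℝ^d → ℝ be L-smooth and μ-strongly convex with minimizer x⋆, and let C ∈ B³(δ). For compressed gradient descent x^{k+1} = x^k − η C^k(∇f(x^k)) with 0 ≤ η ≤ 1/L, we have E[f(x^k)] − f(x⋆) ≤ (1 − ημ/δ)^k (f(x⁰) − f(x⋆)). -/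
open MeasureTheory

/-- The iterates of compressed gradient descent `x^{n+1} = x^n − η C^n(∇f(x^n))`,
where the compressor at step `n` uses the fresh randomness `ω (Fin.last n)`. -/
noncomputable def cgdIter {d : ℕ} {Ω₀ : Type*}
    (C : ℕ → EuclideanSpace ℝ (Fin d) → Ω₀ → EuclideanSpace ℝ (Fin d))
    (f' : EuclideanSpace ℝ (Fin d) → EuclideanSpace ℝ (Fin d))
    (η : ℝ) (x0 : EuclideanSpace ℝ (Fin d)) :
    (n : ℕ) → (Fin n → Ω₀) → EuclideanSpace ℝ (Fin d)
  | 0, _ => x0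
  | (n + 1), ω =>
      cgdIter C f' η x0 n (ω ∘ Fin.castSucc) -
        η • C n (f' (cgdIter C f' η x0 n (ω ∘ Fin.castSucc))) (ω (Fin.last n))

/-!
Smoothness bounds `E f(x - ηC(g))` by `f x - η E⟪g, C g⟫ + Lη²/2 E‖C g‖²`, and expanding the
`B³(δ)` bound `E‖C g - g‖² ≤ (1 - 1/δ)‖g‖²` shows `2 E⟪g, C g⟫ - E‖C g‖² ≥ ‖g‖²/δ`; with
`ηL ≤ 1` one step decreases `f` in expectation by at least `η‖∇f‖²/(2δ)`. Strong convexity gives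
the Polyak–Łojasiewicz inequality `‖∇f x‖² ≥ 2μ (f x - f x⋆)`, so each step contracts the
optimality gap by `1 - ημ/δ`. Since the fresh randomness of each step is independent of the past,
Fubini on the product measure turns the conditional one-step bound into a bound on expectations.
-/

section Descent

variable {E : Type*} [NormedAddCommGroup E] {Ω : Type*} [MeasurableSpace Ω] {P : Measure Ω}

theorem one_le_of_integral_norm_sub_sq_le {K : Ω → E} {g : E} {δ : ℝ} (hg : g ≠ 0)
    (hδ : 0 < δ) (hB : ∫ ω, ‖K ω - g‖ ^ 2 ∂P ≤ (1 - 1 / δ) * ‖g‖ ^ 2) : 1 ≤ δ := by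
  have h := nonneg_of_mul_nonneg_left ((integral_nonneg fun _ => sq_nonneg _).trans hB)
    (by positivity)
  rwa [sub_nonneg, div_le_one hδ] at h

variable [InnerProductSpace ℝ E]

theorem norm_sq_div_le_of_integral_norm_sub_sq_le [IsProbabilityMeasure P] {K : Ω → E} {g : E}
    {δ : ℝ} (hK : Integrable K P) (hK2 : Integrable (fun ω => ‖K ω‖ ^ 2) P)
    (hB : ∫ ω, ‖K ω - g‖ ^ 2 ∂P ≤ (1 - 1 / δ) * ‖g‖ ^ 2) :
    ‖g‖ ^ 2 / δ ≤ 2 * ∫ ω, inner ℝ g (K ω) ∂P - ∫ ω, ‖K ω‖ ^ 2 ∂P := by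
  have hexp : ∫ ω, ‖K ω - g‖ ^ 2 ∂P
      = ∫ ω, ‖K ω‖ ^ 2 ∂P - 2 * ∫ ω, inner ℝ g (K ω) ∂P + ‖g‖ ^ 2 := by
    have hlin : Integrable (fun ω => 2 * inner ℝ g (K ω)) P := (hK.const_inner g).const_mul 2
    simp_rw [norm_sub_sq_real, real_inner_comm g (K _)]
    rw [integral_add (f := fun ω => ‖K ω‖ ^ 2 - 2 * inner ℝ g (K ω)) (hK2.sub hlin)
      (integrable_const _), integral_sub hK2 hlin, integral_const_mul, integral_const,
      probReal_univ, one_smul]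
  rw [hexp] at hB
  linarith [show (1 - 1 / δ) * ‖g‖ ^ 2 = ‖g‖ ^ 2 - ‖g‖ ^ 2 / δ by ring]

theorem integral_comp_sub_smul_le [IsProbabilityMeasure P] {f : E → ℝ} {x g : E} {K : Ω → E}
    {L η δ : ℝ} (hsmooth : ∀ y, f y ≤ f x + inner ℝ g (y - x) + L / 2 * ‖y - x‖ ^ 2)
    (hη0 : 0 ≤ η) (hηL : η * L ≤ 1) (hK : Integrable K P)
    (hK2 : Integrable (fun ω => ‖K ω‖ ^ 2) P) (hfK : Integrable (fun ω => f (x - η • K ω)) P)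
    (hB : ∫ ω, ‖K ω - g‖ ^ 2 ∂P ≤ (1 - 1 / δ) * ‖g‖ ^ 2) :
    ∫ ω, f (x - η • K ω) ∂P ≤ f x - η / (2 * δ) * ‖g‖ ^ 2 := by
  have hpt : ∀ ω, f (x - η • K ω) ≤ f x - η * inner ℝ g (K ω) + L * η ^ 2 / 2 * ‖K ω‖ ^ 2 := by
    intro ω
    have h := hsmooth (x - η • K ω)
    rw [sub_sub_cancel_left, inner_neg_right, real_inner_smul_right, norm_neg, norm_smul,
      Real.norm_eq_abs, abs_of_nonneg hη0] at h
    linarith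
  have hlin : Integrable (fun ω => f x - η * inner ℝ g (K ω)) P :=
    (integrable_const _).sub ((hK.const_inner g).const_mul η)
  have hquad : Integrable (fun ω => L * η ^ 2 / 2 * ‖K ω‖ ^ 2) P := hK2.const_mul _
  have hmono := integral_mono
    (g := fun ω => f x - η * inner ℝ g (K ω) + L * η ^ 2 / 2 * ‖K ω‖ ^ 2) hfK (hlin.add hquad) hpt
  rw [integral_add hlin hquad, integral_sub (integrable_const _)
    ((hK.const_inner g).const_mul η), integral_const, integral_const_mul, integral_const_mul,
    probReal_univ, one_smul] at hmono
  have hgap := mul_le_mul_of_nonneg_left (norm_sq_div_le_of_integral_norm_sub_sq_le hK hK2 hB) hη0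
  have hLη : L * η ^ 2 ≤ η := by nlinarith
  have hI2 := mul_le_mul_of_nonneg_right hLη (integral_nonneg (μ := P) fun ω => sq_nonneg ‖K ω‖)
  have : η / (2 * δ) * ‖g‖ ^ 2 = η * (‖g‖ ^ 2 / δ) / 2 := by ring
  linarith

theorem two_mul_mul_sub_le_norm_sq {f : E → ℝ} {x y g : E} {μ : ℝ} (hμ : 0 < μ)
    (hstrong : f x + inner ℝ g (y - x) + μ / 2 * ‖y - x‖ ^ 2 ≤ f y) :
    2 * μ * (f x - f y) ≤ ‖g‖ ^ 2 := by
  have hsq : ‖g + μ • (y - x)‖ ^ 2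
      = ‖g‖ ^ 2 + 2 * (μ * inner ℝ g (y - x)) + μ ^ 2 * ‖y - x‖ ^ 2 := by
    rw [norm_add_sq_real, real_inner_smul_right, norm_smul, Real.norm_eq_abs, abs_of_pos hμ]
    ring
  nlinarith [sq_nonneg ‖g + μ • (y - x)‖]

theorem integral_comp_sub_smul_sub_le [IsProbabilityMeasure P] {f : E → ℝ} {x xstar g : E}
    {K : Ω → E} {L μ η δ : ℝ}
    (hsmooth : ∀ y, f y ≤ f x + inner ℝ g (y - x) + L / 2 * ‖y - x‖ ^ 2)
    (hstrong : f x + inner ℝ g (xstar - x) + μ / 2 * ‖xstar - x‖ ^ 2 ≤ f xstar) (hμ : 0 < μ)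
    (hδ : 0 < δ) (hη0 : 0 ≤ η) (hηL : η * L ≤ 1) (hK : Integrable K P)
    (hK2 : Integrable (fun ω => ‖K ω‖ ^ 2) P) (hfK : Integrable (fun ω => f (x - η • K ω)) P)
    (hB : ∫ ω, ‖K ω - g‖ ^ 2 ∂P ≤ (1 - 1 / δ) * ‖g‖ ^ 2) :
    ∫ ω, f (x - η • K ω) ∂P - f xstar ≤ (1 - η * μ / δ) * (f x - f xstar) := by
  have hdescent := integral_comp_sub_smul_le hsmooth hη0 hηL hK hK2 hfK hB
  have hPL := mul_le_mul_of_nonneg_left (two_mul_mul_sub_le_norm_sq hμ hstrong)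
    (by positivity : 0 ≤ η / (2 * δ))
  have : η / (2 * δ) * (2 * μ * (f x - f xstar)) = η * μ / δ * (f x - f xstar) := by
    field_simp
  linarith

end Descent

theorem integral_pi_fin_succ_le {Ω : Type*} [MeasurableSpace Ω] (P : Measure Ω) [SigmaFinite P]
    {n : ℕ} (F : (Fin n → Ω) → Ω → ℝ) (B : (Fin n → Ω) → ℝ)
    (hF : Integrable (fun ω => F (ω ∘ Fin.castSucc) (ω (Fin.last n)))
      (Measure.pi fun _ : Fin (n + 1) => P))
    (hB : Integrable B (Measure.pi fun _ : Fin n => P))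
    (hle : ∀ ω', Integrable (F ω') P → ∫ a, F ω' a ∂P ≤ B ω') :
    ∫ ω, F (ω ∘ Fin.castSucc) (ω (Fin.last n)) ∂(Measure.pi fun _ : Fin (n + 1) => P)
      ≤ ∫ ω', B ω' ∂(Measure.pi fun _ : Fin n => P) := by
  have hmp := measurePreserving_piFinSuccAbove (fun _ : Fin (n + 1) => P) (Fin.last n)
  set e := MeasurableEquiv.piFinSuccAbove (fun _ : Fin (n + 1) => Ω) (Fin.last n)
  set G : Ω × (Fin n → Ω) → ℝ := fun p => F p.2 p.1
  have hGe : (fun ω => F (ω ∘ Fin.castSucc) (ω (Fin.last n))) = fun ω => G (e ω) := by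
    funext ω
    simp only [MeasurableEquiv.piFinSuccAbove_apply, Fin.insertNthEquiv_last,
      Fin.snocEquiv_symm_apply, G, e]
    rfl
  rw [hGe] at hF ⊢
  have hG : Integrable G (P.prod (Measure.pi fun _ : Fin n => P)) :=
    (hmp.integrable_comp_emb e.measurableEmbedding).mp hF
  rw [hmp.integral_comp' G, integral_prod_symm G hG]
  exact integral_mono_ae hG.integral_prod_right hB (hG.prod_left_ae.mono fun ω' h => hle ω' h)

theorem stmt15_general {d : ℕ} (hd : 0 < d) {Ω₀ : Type*} [MeasurableSpace Ω₀]
    (P : Measure Ω₀) [IsProbabilityMeasure P]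
    (f : EuclideanSpace ℝ (Fin d) → ℝ)
    (f' : EuclideanSpace ℝ (Fin d) → EuclideanSpace ℝ (Fin d))
    (L μ : ℝ) (hμ : 0 < μ) (hμL : μ ≤ L)
    (hsmooth : ∀ x y, f y ≤ f x + (inner ℝ (f' x) (y - x) : ℝ) + L / 2 * ‖y - x‖ ^ 2)
    (hstrong : ∀ x y, f x + (inner ℝ (f' x) (y - x) : ℝ) + μ / 2 * ‖y - x‖ ^ 2 ≤ f y)
    (xstar : EuclideanSpace ℝ (Fin d))
    (C : ℕ → EuclideanSpace ℝ (Fin d) → Ω₀ → EuclideanSpace ℝ (Fin d))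
    (δ : ℝ) (hδ : 0 < δ)
    (hintC : ∀ n g, Integrable (C n g) P)
    (hintC2 : ∀ n g, Integrable (fun ω => ‖C n g ω‖ ^ 2) P)
    (hB : ∀ n g, ∫ ω, ‖C n g ω - g‖ ^ 2 ∂P ≤ (1 - 1 / δ) * ‖g‖ ^ 2)
    (η : ℝ) (hη0 : 0 ≤ η) (hη : η ≤ 1 / L)
    (x0 : EuclideanSpace ℝ (Fin d))
    (hintf : ∀ n, Integrable (fun ω => f (cgdIter C f' η x0 n ω))
      (Measure.pi fun _ : Fin n => P)) :
    ∀ k : ℕ,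
      (∫ ω, f (cgdIter C f' η x0 k ω) ∂(Measure.pi fun _ : Fin k => P)) - f xstar
        ≤ (1 - η * μ / δ) ^ k * (f x0 - f xstar) := by
  intro k
  have hηL : η * L ≤ 1 := (le_div_iff₀ (hμ.trans_le hμL)).mp hη
  have hδ1 : 1 ≤ δ := one_le_of_integral_norm_sub_sq_le
    (by simp : EuclideanSpace.single (⟨0, hd⟩ : Fin d) (1 : ℝ) ≠ 0) hδ (hB 0 _)
  have hr : 0 ≤ 1 - η * μ / δ := by
    rw [sub_nonneg, div_le_one hδ]
    nlinarith
  set r := 1 - η * μ / δ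
  set X := cgdIter C f' η x0
  have hcontract : ∀ n, ∫ ω, f (X (n + 1) ω) ∂(Measure.pi fun _ : Fin (n + 1) => P) - f xstar
      ≤ r * (∫ ω, f (X n ω) ∂(Measure.pi fun _ : Fin n => P) - f xstar) := by
    intro n
    have hbound : ∫ ω, f (X (n + 1) ω) ∂(Measure.pi fun _ : Fin (n + 1) => P)
        ≤ ∫ ω', (r * f (X n ω') + (1 - r) * f xstar) ∂(Measure.pi fun _ : Fin n => P) :=
      integral_pi_fin_succ_le P (fun ω' a => f (X n ω' - η • C n (f' (X n ω')) a)) _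
        (hintf (n + 1)) (((hintf n).const_mul r).add (integrable_const _)) fun ω' hfK => by
          linarith [integral_comp_sub_smul_sub_le (hsmooth _) (hstrong _ xstar) hμ hδ hη0 hηL
            (hintC n _) (hintC2 n _) hfK (hB n _)]
    rw [integral_add ((hintf n).const_mul r) (integrable_const _), integral_const_mul,
      integral_const, probReal_univ, one_smul] at hbound
    linarith
  simpa [X, cgdIter] using le_geom (u := fun n =>
    ∫ ω, f (X n ω) ∂(Measure.pi fun _ : Fin n => P) - f xstar) hr k fun n _ => hcontract n

/-- Compressed gradient descent with independent compressors `C^k ∈ B³(δ)` on an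
`L`-smooth, `μ`-strongly convex `f` with minimizer `x⋆`: for `0 ≤ η ≤ 1/L`,
`E[f(x^k)] − f(x⋆) ≤ (1 − ημ/δ)^k (f(x⁰) − f(x⋆))`. Independence of the
compressors across iterations is modeled by the product probability measure. -/
theorem stmt15 {d : ℕ} (hd : 0 < d) {Ω₀ : Type*} [MeasurableSpace Ω₀]
    (P : Measure Ω₀) [IsProbabilityMeasure P]
    (f : EuclideanSpace ℝ (Fin d) → ℝ)
    (f' : EuclideanSpace ℝ (Fin d) → EuclideanSpace ℝ (Fin d))
    (L μ : ℝ) (hμ : 0 < μ) (hμL : μ ≤ L)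
    (hf : Continuous f) (hf' : Continuous f')
    (hsmooth : ∀ x y, f y ≤ f x + (inner ℝ (f' x) (y - x) : ℝ) + L / 2 * ‖y - x‖ ^ 2)
    (hstrong : ∀ x y, f x + (inner ℝ (f' x) (y - x) : ℝ) + μ / 2 * ‖y - x‖ ^ 2 ≤ f y)
    (xstar : EuclideanSpace ℝ (Fin d)) (hmin : ∀ x, f xstar ≤ f x)
    (C : ℕ → EuclideanSpace ℝ (Fin d) → Ω₀ → EuclideanSpace ℝ (Fin d))
    (hCmeas : ∀ n, Measurable (Function.uncurry (C n)))
    (δ : ℝ) (hδ : 0 < δ)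
    (hintC : ∀ n g, Integrable (C n g) P)
    (hintC2 : ∀ n g, Integrable (fun ω => ‖C n g ω‖ ^ 2) P)
    (hB : ∀ n g, ∫ ω, ‖C n g ω - g‖ ^ 2 ∂P ≤ (1 - 1 / δ) * ‖g‖ ^ 2)
    (η : ℝ) (hη0 : 0 ≤ η) (hη : η ≤ 1 / L)
    (x0 : EuclideanSpace ℝ (Fin d))
    (hintf : ∀ n, Integrable (fun ω => f (cgdIter C f' η x0 n ω))
      (Measure.pi fun _ : Fin n => P)) :
    ∀ k : ℕ,
      (∫ ω, f (cgdIter C f' η x0 k ω) ∂(Measure.pi fun _ : Fin k => P)) - f xstar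
        ≤ (1 - η * μ / δ) ^ k * (f x0 - f xstar) :=
  stmt15_general hd P f f' L μ hμ hμL hsmooth hstrong xstar C δ hδ hintC hintC2 hB η hη0 hη x0 hintf
end

section
/- Let f : ℝ^d → ℝ be L-smooth and C ∈ B¹(α,β). Then for any x and 0 ≤ η ≤ 2/(βL), E[f(x − ηC(∇f(x)))] ≤ f(x) − (α/β)η(1 − ηβL/2)‖∇f(x)‖². -/
open MeasureTheory

/-!
Smoothness bounds `f (x - η C)` pointwise by a quadratic in `C` whose expectation involves only
`E[C]` and `E‖C‖²`. The upper `B¹` bound trades the second moment against the descent term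
`η ⟪E[C], ∇f x⟫`, and the lower one converts what remains into a multiple of `‖∇f x‖²`.
-/

section

variable {E : Type*} [NormedAddCommGroup E] [InnerProductSpace ℝ E]

theorem apply_sub_smul_le_of_quadratic_bound {f : E → ℝ} {x g : E} {L : ℝ}
    (hsmooth : ∀ y, f y ≤ f x + inner ℝ g (y - x) + L / 2 * ‖y - x‖ ^ 2) (η : ℝ) (v : E) :
    f (x - η • v) ≤ f x - η * inner ℝ g v + L / 2 * η ^ 2 * ‖v‖ ^ 2 := by
  have h := hsmooth (x - η • v)
  rwa [sub_sub_cancel_left, inner_neg_right, real_inner_smul_right, norm_neg, norm_smul,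
    Real.norm_eq_abs, mul_pow, sq_abs, ← sub_eq_add_neg, ← mul_assoc] at h

theorem integral_apply_sub_smul_le_of_quadratic_bound [CompleteSpace E]
    {Ω : Type*} [MeasurableSpace Ω] {μ : Measure Ω} [IsProbabilityMeasure μ]
    {f : E → ℝ} {x g : E} {L : ℝ}
    (hsmooth : ∀ y, f y ≤ f x + inner ℝ g (y - x) + L / 2 * ‖y - x‖ ^ 2) (η : ℝ)
    {V : Ω → E} (hV : Integrable V μ) (hV2 : Integrable (fun ω => ‖V ω‖ ^ 2) μ)
    (hf : Integrable (fun ω => f (x - η • V ω)) μ) :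
    ∫ ω, f (x - η • V ω) ∂μ
      ≤ f x - η * inner ℝ g (∫ ω, V ω ∂μ) + L / 2 * η ^ 2 * ∫ ω, ‖V ω‖ ^ 2 ∂μ := by
  have hinner : Integrable (fun ω => η * inner ℝ g (V ω)) μ := (hV.const_inner g).const_mul η
  have hsq : Integrable (fun ω => L / 2 * η ^ 2 * ‖V ω‖ ^ 2) μ := hV2.const_mul _
  have hlin : Integrable (fun ω => f x - η * inner ℝ g (V ω)) μ :=
    (integrable_const _).sub hinner
  calc ∫ ω, f (x - η • V ω) ∂μ
      ≤ ∫ ω, (f x - η * inner ℝ g (V ω) + L / 2 * η ^ 2 * ‖V ω‖ ^ 2) ∂μ :=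
        integral_mono hf (hlin.add hsq)
          fun ω => apply_sub_smul_le_of_quadratic_bound hsmooth η (V ω)
    _ = f x - η * inner ℝ g (∫ ω, V ω ∂μ) + L / 2 * η ^ 2 * ∫ ω, ‖V ω‖ ^ 2 ∂μ := by
        rw [integral_add hlin hsq,
          integral_sub (integrable_const _) hinner, integral_const, integral_const_mul,
          integral_const_mul, integral_inner hV]
        simp

end

theorem descent_bound_of_moment_bounds {α β η L a p S : ℝ} (hβ : 0 < β) (hη0 : 0 ≤ η)
    (hηβL : η * β * L ≤ 2) (hS₁ : α * a ≤ S) (hS₂ : S ≤ β * p) :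
    -(η * p) + L / 2 * η ^ 2 * S ≤ -(α / β * η * (1 - η * β * L / 2) * a) := by
  have hcoef : 0 ≤ η / β * (1 - η * β * L / 2) := by
    have : 0 ≤ 1 - η * β * L / 2 := by linarith
    positivity
  have hp : S / β ≤ p := (div_le_iff₀' hβ).2 hS₂
  calc -(η * p) + L / 2 * η ^ 2 * S
      ≤ -(η * (S / β)) + L / 2 * η ^ 2 * S := by gcongr
    _ = -(η / β * (1 - η * β * L / 2) * S) := by field_simp; ring
    _ ≤ -(η / β * (1 - η * β * L / 2) * (α * a)) := by gcongr
    _ = -(α / β * η * (1 - η * β * L / 2) * a) := by ring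

theorem stmt16_general {d : ℕ} {Ω : Type*} [MeasurableSpace Ω]
    (μ : Measure Ω) [IsProbabilityMeasure μ]
    (f : EuclideanSpace ℝ (Fin d) → ℝ) (f' : EuclideanSpace ℝ (Fin d) → EuclideanSpace ℝ (Fin d))
    (L : ℝ) (hL : 0 < L)
    (hsmooth : ∀ x y, f y ≤ f x + (inner ℝ (f' x) (y - x) : ℝ) + L / 2 * ‖y - x‖ ^ 2)
    (C : EuclideanSpace ℝ (Fin d) → Ω → EuclideanSpace ℝ (Fin d))
    (α β : ℝ) (hβ : 0 < β)
    (hintC : ∀ g, Integrable (C g) μ)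
    (hintC2 : ∀ g, Integrable (fun ω => ‖C g ω‖ ^ 2) μ)
    (hB : ∀ g, α * ‖g‖ ^ 2 ≤ ∫ ω, ‖C g ω‖ ^ 2 ∂μ ∧
      ∫ ω, ‖C g ω‖ ^ 2 ∂μ ≤ β * (inner ℝ (∫ ω, C g ω ∂μ) g : ℝ))
    (η : ℝ) (hη0 : 0 ≤ η) (hη : η ≤ 2 / (β * L)) (x : EuclideanSpace ℝ (Fin d))
    (hintf : Integrable (fun ω => f (x - η • C (f' x) ω)) μ) :
    ∫ ω, f (x - η • C (f' x) ω) ∂μ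
      ≤ f x - (α / β) * η * (1 - η * β * L / 2) * ‖f' x‖ ^ 2 := by
  have hηβL : η * β * L ≤ 2 := by
    rw [mul_assoc]
    exact mul_le_of_le_div₀ zero_le_two (by positivity) hη
  obtain ⟨hS₁, hS₂⟩ := hB (f' x)
  rw [real_inner_comm] at hS₂
  have hdescent := descent_bound_of_moment_bounds hβ hη0 hηβL hS₁ hS₂
  have hexp := integral_apply_sub_smul_le_of_quadratic_bound (hsmooth x) η
    (hintC (f' x)) (hintC2 (f' x)) hintf
  linarith

/-- One step of compressed gradient descent with `C ∈ B¹(α,β)`: if `f` is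
`L`-smooth with gradient `f'`, then for `0 ≤ η ≤ 2/(βL)`,
`E[f(x − ηC(∇f(x)))] ≤ f(x) − (α/β)η(1 − ηβL/2)‖∇f(x)‖²`. -/
theorem stmt16 {d : ℕ} {Ω : Type*} [MeasurableSpace Ω]
    (μ : Measure Ω) [IsProbabilityMeasure μ]
    (f : EuclideanSpace ℝ (Fin d) → ℝ) (f' : EuclideanSpace ℝ (Fin d) → EuclideanSpace ℝ (Fin d))
    (L : ℝ) (hL : 0 < L)
    (hsmooth : ∀ x y, f y ≤ f x + (inner ℝ (f' x) (y - x) : ℝ) + L / 2 * ‖y - x‖ ^ 2)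
    (C : EuclideanSpace ℝ (Fin d) → Ω → EuclideanSpace ℝ (Fin d))
    (α β : ℝ) (hα : 0 < α) (hβ : 0 < β)
    (hintC : ∀ g, Integrable (C g) μ)
    (hintC2 : ∀ g, Integrable (fun ω => ‖C g ω‖ ^ 2) μ)
    (hB : ∀ g, α * ‖g‖ ^ 2 ≤ ∫ ω, ‖C g ω‖ ^ 2 ∂μ ∧
      ∫ ω, ‖C g ω‖ ^ 2 ∂μ ≤ β * (inner ℝ (∫ ω, C g ω ∂μ) g : ℝ))
    (η : ℝ) (hη0 : 0 ≤ η) (hη : η ≤ 2 / (β * L)) (x : EuclideanSpace ℝ (Fin d))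
    (hintf : Integrable (fun ω => f (x - η • C (f' x) ω)) μ) :
    ∫ ω, f (x - η • C (f' x) ω) ∂μ
      ≤ f x - (α / β) * η * (1 - η * β * L / 2) * ‖f' x‖ ^ 2 :=
  stmt16_general μ f f' L hL hsmooth C α β hβ hintC hintC2 hB η hη0 hη x hintf
end
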